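/- For every n ≥ 1, N = 2ⁿ, and i ∈ [1..2N], let R denote the i-th row of ShiftBin_N, viewed as a 1D string of length N(n+2). Then every 1D SLP deriving a string that contains R as a substring has at least min{i, 2N−i+1} nonterminals. -/

import Mathlib

/-!
## Two-dimensional strings.
A 2D string over alphabet `A` of size `h × w` is represented canonically:
`f i j` is `some` of the character in (0-indexed) row `i`, column `j` when
`i < h` and `j < w`, and `none` outside of the rectangle.  All operations
below produce such canonical representations, so equality of 2D strings
built from them coincides with equality of the dimensions and of all entries.
-/
structure Str2 (A : Type) where
  h : ℕ
  w : ℕ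
  f : ℕ → ℕ → Option A

namespace Str2

variable {A : Type}

/-- Canonical constructor: pads with `none` outside of the `h × w` rectangle. -/
def mk' (h w : ℕ) (g : ℕ → ℕ → Option A) : Str2 A :=
  ⟨h, w, fun i j => if i < h ∧ j < w then g i j else none⟩

/-- The empty 2D string. -/
def empty : Str2 A := ⟨0, 0, fun _ _ => none⟩

/-- The `1 × 1` 2D string consisting of a single character. -/
def single (a : A) : Str2 A := mk' 1 1 fun _ _ => some a

/-- Horizontal concatenation `S ⊞ T` (meaningful when the heights agree). -/
def hcat (S T : Str2 A) : Str2 A :=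
  mk' S.h (S.w + T.w) fun i j => if j < S.w then S.f i j else T.f i (j - S.w)

/-- Vertical concatenation `S ⊟ T` (meaningful when the widths agree). -/
def vcat (S T : Str2 A) : Str2 A :=
  mk' (S.h + T.h) S.w fun i j => if i < S.h then S.f i j else T.f (i - S.h) j

/-- Horizontal concatenation `S₁ ⊞ S₂ ⊞ ⋯ ⊞ S_k` of a list of 2D strings. -/
def hcatList : List (Str2 A) → Str2 A
  | [] => empty
  | S :: rest => rest.foldl hcat S

/-- Vertical concatenation `S₁ ⊟ S₂ ⊟ ⋯ ⊟ S_k` of a list of 2D strings. -/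
def vcatList : List (Str2 A) → Str2 A
  | [] => empty
  | S :: rest => rest.foldl vcat S

/-- The transpose. -/
def transpose (S : Str2 A) : Str2 A := mk' S.w S.h fun i j => S.f j i

/-- The `i`-th row (0-indexed) of `S`, as a `1 × w` 2D string. -/
def rowStr (S : Str2 A) (i : ℕ) : Str2 A := mk' 1 S.w fun _ j => S.f i j

/-- The `j`-th column (0-indexed) of `S`, read top to bottom, as a `1 × h` 2D string. -/
def colStr (S : Str2 A) (j : ℕ) : Str2 A := mk' 1 S.h fun _ i => S.f i j

/-- A height-one 2D string, viewed as an ordinary (1D) string, i.e. a list. -/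
def toList (S : Str2 A) : List A := (List.range S.w).filterMap fun j => S.f 0 j

/-- An ordinary (1D) string viewed as a height-one 2D string. -/
def ofList (l : List A) : Str2 A := mk' 1 l.length fun _ j => l[j]?

/-- The concatenation of all rows of `S` from top to bottom,
as a height-one 2D string of width `h * w`. -/
def rowsConcat (S : Str2 A) : Str2 A :=
  mk' 1 (S.h * S.w) fun _ j => S.f (j / S.w) (j % S.w)

end Str2

/-- The right-hand side of a production of a 2D SLP: a single character,
a horizontal concatenation of two nonterminals, or a vertical concatenation
of two nonterminals. -/
inductive Rhs2 (A V : Type) where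
  | chr : A → Rhs2 A V
  | horiz : V → V → Rhs2 A V
  | vert : V → V → Rhs2 A V

/-- A two-dimensional straight-line program over the alphabet `A`:
a finite set `V` of nonterminals, a starting nonterminal, and a production
map `rhs`.  Acyclicity of the relation "appears in the right-hand side of"
is witnessed by the function `rank`, which strictly decreases from the
left-hand side of each production to the nonterminals on its right-hand side. -/
structure SLP2 (A : Type) where
  V : Type
  fintypeV : Fintype V
  start : V
  rhs : V → Rhs2 A V
  rank : V → ℕ
  rank_horiz : ∀ {X Y Z}, rhs X = Rhs2.horiz Y Z → rank Y < rank X ∧ rank Z < rank X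
  rank_vert : ∀ {X Y Z}, rhs X = Rhs2.vert Y Z → rank Y < rank X ∧ rank Z < rank X

namespace SLP2

variable {A : Type}

/-- Fuel-based evaluation of expansions (with enough fuel it computes the
unique expansion of a nonterminal). -/
def expAux (G : SLP2 A) : ℕ → G.V → Str2 A
  | 0, _ => Str2.empty
  | n + 1, X =>
    match G.rhs X with
    | .chr a => Str2.single a
    | .horiz Y Z => (G.expAux n Y).hcat (G.expAux n Z)
    | .vert Y Z => (G.expAux n Y).vcat (G.expAux n Z)

/-- The (unique) expansion of a nonterminal `X`: since `rank` strictly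
decreases along productions, fuel `rank X + 1` always suffices. -/
def expNT (G : SLP2 A) (X : G.V) : Str2 A := G.expAux (G.rank X + 1) X

/-- The 2D string derived by the SLP. -/
def exp (G : SLP2 A) : Str2 A := G.expNT G.start

/-- Fuel-based computation of the depth of the derivation tree below a
nonterminal (a node labeled by a production `chr σ` has a single leaf child). -/
def depthAux (G : SLP2 A) : ℕ → G.V → ℕ
  | 0, _ => 0
  | n + 1, X =>
    match G.rhs X with
    | .chr _ => 1
    | .horiz Y Z => 1 + max (G.depthAux n Y) (G.depthAux n Z)
    | .vert Y Z => 1 + max (G.depthAux n Y) (G.depthAux n Z)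

/-- The depth of the derivation tree below nonterminal `X`. -/
def depthNT (G : SLP2 A) (X : G.V) : ℕ := G.depthAux (G.rank X + 1) X

/-- The depth of the SLP: the depth of its derivation tree. -/
def depth (G : SLP2 A) : ℕ := G.depthNT G.start

/-- The size of the SLP: the total number of symbols on the right-hand
sides of all productions. -/
def size (G : SLP2 A) : ℕ :=
  letI := G.fintypeV
  ∑ X : G.V, (match G.rhs X with
    | .chr _ => 1
    | .horiz _ _ => 2
    | .vert _ _ => 2)

/-- The number of nonterminals of the SLP. -/
def numNT (G : SLP2 A) : ℕ :=
  letI := G.fintypeV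
  Fintype.card G.V

/-- Well-formedness: dimensions match in every production, i.e. in a
horizontal concatenation both arguments have equal heights, and in a
vertical concatenation both arguments have equal widths. -/
def WF (G : SLP2 A) : Prop :=
  ∀ X : G.V,
    match G.rhs X with
    | .chr _ => True
    | .horiz Y Z => (G.expNT Y).h = (G.expNT Z).h
    | .vert Y Z => (G.expNT Y).w = (G.expNT Z).w

/-- A 1D SLP: a 2D SLP that uses only horizontal concatenations and derives
a string of height `1`. -/
def OneDim (G : SLP2 A) : Prop :=
  (∀ X Y Z, G.rhs X ≠ Rhs2.vert Y Z) ∧ (G.exp).h = 1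

end SLP2
/-- The alphabet `{0, 1, $}`. -/
inductive Alpha3 : Type where
  | zero : Alpha3
  | one : Alpha3
  | dollar : Alpha3
deriving DecidableEq

instance instFintypeAlpha3 : Fintype Alpha3 :=
  ⟨{Alpha3.zero, Alpha3.one, Alpha3.dollar}, fun x => by cases x <;> simp⟩

/-- For `N = 2^n`, the 2D string `Bin_N` of size `N × (n+2)` whose `i`-th row
(1-indexed) is the `n`-bit binary representation (most significant bit first)
of `i - 1`, surrounded by one `$` symbol on each side. -/
def binStr (n : ℕ) : Str2 Alpha3 :=
  Str2.mk' (2 ^ n) (n + 2) fun i j =>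
    some (if j = 0 ∨ j = n + 1 then Alpha3.dollar
      else if Nat.testBit i (n - j) then Alpha3.one else Alpha3.zero)

/-- For `N = 2^n`, the 2D string `ShiftBin_N` of size `2N × N(n+2)`: for every
`i ∈ [0..N-1]`, the columns `i(n+2)+1` through `(i+1)(n+2)` (1-indexed) consist
of `i` rows filled with `0`'s, followed by a copy of `Bin_N`, followed by
`N - i` rows filled with `0`'s. -/
def shiftBinStr (n : ℕ) : Str2 Alpha3 :=
  Str2.mk' (2 * 2 ^ n) (2 ^ n * (n + 2)) fun r c =>
    let i := c / (n + 2)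
    if i ≤ r ∧ r < i + 2 ^ n then (binStr n).f (r - i) (c % (n + 2)) else some Alpha3.zero

/-- A binary string `b`, surrounded by one `$` symbol on each side, as a string
over an alphabet with distinguished symbols `z` (zero), `o` (one), `d` (dollar). -/
def dollarWrap {A : Type} (z o d : A) (b : List Bool) : List A :=
  d :: (b.map fun x => if x then o else z) ++ [d]

/-- The exponent of `M'`: the largest `m` such that `M' = 2^m` satisfies
`M' * (log₂ M' + 2) ≤ M / 2`, i.e. `2 * 2^m * (m + 2) ≤ M`. -/
def mExp (M : ℕ) : ℕ := Nat.findGreatest (fun m => 2 * 2 ^ m * (m + 2) ≤ M) M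

/-- The 2D string `C_{N,M}` of size `N × M`: with `M'` the largest power of two
such that `M' * (log₂ M' + 2) ≤ M / 2` and `B = ShiftBin_{M'}` (of size
`2M' × M'(log₂ M' + 2)`), it consists of a left block of `⌊N/(2M')⌋` vertically
concatenated copies of `B` padded below with `0`'s to height `N`; to its right,
a right block of `M'` rows of `0`'s followed by `⌊(N-M')/(2M')⌋` vertically
concatenated copies of `B`, padded below with `0`'s to height `N`; and columns
of `0`'s padding the total width to `M`. -/
def gadgetC (N M : ℕ) : Str2 Alpha3 :=
  let n := mExp M
  let M' := 2 ^ n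
  let W := M' * (n + 2)
  Str2.mk' N M fun r c =>
    if c < W then
      (if r < 2 * M' * (N / (2 * M')) then (shiftBinStr n).f (r % (2 * M')) c
       else some Alpha3.zero)
    else if c < 2 * W then
      (if M' ≤ r ∧ r < M' + 2 * M' * ((N - M') / (2 * M'))
       then (shiftBinStr n).f ((r - M') % (2 * M')) (c - W)
       else some Alpha3.zero)
    else some Alpha3.zero


/-!
Cut row `i - 1` of `ShiftBin_N` into its `N` blocks of width `n + 2`: each block is either
`0^{n+2}` or `$b$` for an `n`-bit word `b`, and the distinct blocks number at least
`min i (2N - i + 1)`. An occurrence of a block in the top row of the derived string straddles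
the cut `Y | Z` of some production `X → Y ⊞ Z`. Two blocks straddling the same cut overlap with
a shift in at least two letters, one on each side of the cut; then a `$` of one block lands
strictly inside the other, or a `0` lands at the end of a `$`-block, unless both are
`0^{n+2}`. So distinct blocks give distinct nonterminals.
-/

section Blocks

variable {A : Type} {c d : A} {L : ℕ}

def IsBlock (c d : A) (L : ℕ) (w : List A) : Prop :=
  w = List.replicate L c ∨ w.length = L ∧ ∀ t < L, (w[t]? = some d ↔ t = 0 ∨ t + 1 = L)

lemma IsBlock.length {w : List A} (h : IsBlock c d L w) : w.length = L := by
  rcases h with rfl | ⟨h, -⟩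
  · exact List.length_replicate
  · exact h

/-- The first letter of `m` is an inner letter of `s ++ m`, and its last letter an inner letter
of `m ++ t`. -/
lemma IsBlock.eq_of_overlap (hcd : c ≠ d) {s m t : List A} (h₁ : IsBlock c d L (m ++ t))
    (h₂ : IsBlock c d L (s ++ m)) (hs : s ≠ []) (hm : 2 ≤ m.length) : m ++ t = s ++ m := by
  have hL₂ := h₂.length
  have hsL : 0 < s.length := List.length_pos_iff.2 hs
  simp only [List.length_append] at hL₂
  have hfirst : (s ++ m)[s.length]? = (m ++ t)[0]? := by
    rw [List.getElem?_append_right le_rfl, List.getElem?_append_left (by omega), Nat.sub_self]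
  have hlast : (s ++ m)[L - 1]? = (m ++ t)[m.length - 1]? := by
    rw [List.getElem?_append_right (by omega), List.getElem?_append_left (by omega),
      show L - 1 - s.length = m.length - 1 by omega]
  rcases h₁ with h₁ | ⟨-, h₁⟩ <;> rcases h₂ with h₂ | ⟨-, h₂⟩
  · rw [h₁, h₂]
  · rw [h₁, (h₂ (L - 1) (by omega)).2 (by omega), List.getElem?_replicate_of_lt (by omega)]
      at hlast
    exact absurd (Option.some_injective _ hlast).symm hcd
  · rw [h₂, (h₁ 0 (by omega)).2 (by omega), List.getElem?_replicate_of_lt (by omega)] at hfirst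
    exact absurd (Option.some_injective _ hfirst) hcd
  · have := (h₂ s.length (by omega)).1 (hfirst.trans ((h₁ 0 (by omega)).2 (by omega)))
    omega

lemma IsBlock.eq_of_straddle (hcd : c ≠ d) {u₁ v₁ u₂ v₂ : List A}
    (h₁ : IsBlock c d L (u₁ ++ v₁)) (h₂ : IsBlock c d L (u₂ ++ v₂))
    (hu₁ : u₁ ≠ []) (hv₂ : v₂ ≠ []) (hu : u₁ <:+ u₂) (hv : v₂ <+: v₁) :
    u₁ ++ v₁ = u₂ ++ v₂ := by
  obtain ⟨s, rfl⟩ := hu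
  obtain ⟨t, rfl⟩ := hv
  have hlen := h₁.length.trans h₂.length.symm
  simp only [List.length_append] at hlen
  rcases eq_or_ne s [] with rfl | hs
  · obtain rfl : t = [] := by simpa using hlen
    simp
  · have hm : 2 ≤ (u₁ ++ v₂).length := by
      simp only [List.length_append]
      have := List.length_pos_iff.2 hu₁
      have := List.length_pos_iff.2 hv₂
      omega
    simp only [List.append_assoc] at h₁ h₂ ⊢
    rw [← List.append_assoc] at h₁ ⊢
    exact h₁.eq_of_overlap hcd h₂ hs hm

end Blocks

namespace Str2

variable {A : Type}

lemma toList_single (a : A) : (single a).toList = [a] := by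
  simp [toList, single, mk']

lemma toList_hcat {S : Str2 A} (hS : 0 < S.h) (T : Str2 A) :
    (S.hcat T).toList = S.toList ++ T.toList := by
  simp only [toList, hcat, mk', List.range_add, List.filterMap_append, List.filterMap_map]
  congr 1 <;> refine List.filterMap_congr fun j hj => ?_ <;> rw [List.mem_range] at hj
  · simp [hS, hj, Nat.lt_add_right T.w hj]
  · simp [hS, hj]

lemma toList_vcat {S : Str2 A} (hS : 0 < S.h) (T : Str2 A) : (S.vcat T).toList = S.toList := by
  simp only [toList, vcat, mk']
  refine List.filterMap_congr fun j hj => ?_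
  rw [List.mem_range] at hj
  simp [hS, hj]

lemma toList_rowStr (S : Str2 A) (r : ℕ) :
    (S.rowStr r).toList = (List.range S.w).filterMap (S.f r) := by
  simp only [toList, rowStr, mk']
  refine List.filterMap_congr fun j hj => ?_
  rw [List.mem_range] at hj
  simp [hj]

end Str2

namespace SLP2

variable {A : Type} (G : SLP2 A)

theorem induction_on {motive : G.V → Prop} (X : G.V)
    (chr : ∀ X a, G.rhs X = .chr a → motive X)
    (horiz : ∀ X Y Z, G.rhs X = .horiz Y Z → motive Y → motive Z → motive X)
    (vert : ∀ X Y Z, G.rhs X = .vert Y Z → motive Y → motive Z → motive X) : motive X := by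
  induction hk : G.rank X using Nat.strong_induction_on generalizing X with
  | _ k ih =>
    cases hX : G.rhs X with
    | chr a => exact chr X a hX
    | horiz Y Z =>
      have := G.rank_horiz hX
      exact horiz X Y Z hX (ih _ (hk ▸ this.1) Y rfl) (ih _ (hk ▸ this.2) Z rfl)
    | vert Y Z =>
      have := G.rank_vert hX
      exact vert X Y Z hX (ih _ (hk ▸ this.1) Y rfl) (ih _ (hk ▸ this.2) Z rfl)

variable {G}

lemma expAux_congr {k₁ k₂ : ℕ} {X : G.V} (h₁ : G.rank X < k₁) (h₂ : G.rank X < k₂) :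
    G.expAux k₁ X = G.expAux k₂ X := by
  induction k₁ generalizing X k₂ with
  | zero => omega
  | succ k ih =>
    obtain ⟨k₂, rfl⟩ : ∃ m, k₂ = m + 1 := ⟨k₂ - 1, by omega⟩
    cases hX : G.rhs X with
    | chr a => simp only [expAux, hX]
    | horiz Y Z =>
      have := G.rank_horiz hX
      simp only [expAux, hX]
      rw [ih (k₂ := k₂) (by omega) (by omega), ih (k₂ := k₂) (X := Z) (by omega) (by omega)]
    | vert Y Z =>
      have := G.rank_vert hX
      simp only [expAux, hX]
      rw [ih (k₂ := k₂) (by omega) (by omega), ih (k₂ := k₂) (X := Z) (by omega) (by omega)]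

lemma expNT_chr {X : G.V} {a : A} (h : G.rhs X = .chr a) : G.expNT X = Str2.single a := by
  simp only [expNT, expAux, h]

lemma expNT_horiz {X Y Z : G.V} (h : G.rhs X = .horiz Y Z) :
    G.expNT X = (G.expNT Y).hcat (G.expNT Z) := by
  have := G.rank_horiz h
  calc G.expNT X = (G.expAux (G.rank X) Y).hcat (G.expAux (G.rank X) Z) := by
        simp only [expNT, expAux, h]
    _ = _ := by
      rw [expAux_congr this.1 (Nat.lt_succ_self _), expAux_congr this.2 (Nat.lt_succ_self _)]
      rfl

lemma expNT_vert {X Y Z : G.V} (h : G.rhs X = .vert Y Z) :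
    G.expNT X = (G.expNT Y).vcat (G.expNT Z) := by
  have := G.rank_vert h
  calc G.expNT X = (G.expAux (G.rank X) Y).vcat (G.expAux (G.rank X) Z) := by
        simp only [expNT, expAux, h]
    _ = _ := by
      rw [expAux_congr this.1 (Nat.lt_succ_self _), expAux_congr this.2 (Nat.lt_succ_self _)]
      rfl

lemma expNT_h_pos (X : G.V) : 0 < (G.expNT X).h := by
  induction X using G.induction_on with
  | chr X a h => simp [expNT_chr h, Str2.single, Str2.mk']
  | horiz X Y Z h hY _ => simpa [expNT_horiz h, Str2.hcat, Str2.mk'] using hY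
  | vert X Y Z h hY _ => simp [expNT_vert h, Str2.vcat, Str2.mk']; omega

def Straddles (X : G.V) (w : List A) : Prop :=
  ∃ Y Z u v, G.rhs X = .horiz Y Z ∧ w = u ++ v ∧ u ≠ [] ∧ v ≠ [] ∧
    u <:+ (G.expNT Y).toList ∧ v <+: (G.expNT Z).toList

lemma exists_straddles {w : List A} (hw : 2 ≤ w.length) (X : G.V)
    (hX : w <:+: (G.expNT X).toList) : ∃ X', G.Straddles X' w := by
  induction X using G.induction_on with
  | chr X a h =>
    have := hX.length_le
    simp [expNT_chr h, Str2.toList_single] at this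
    omega
  | horiz X Y Z h ihY ihZ =>
    rw [expNT_horiz h, Str2.toList_hcat (expNT_h_pos Y), List.infix_append_iff] at hX
    rcases hX with hY | hZ | ⟨u, v, rfl, hu, hv⟩
    · exact ihY hY
    · exact ihZ hZ
    rcases eq_or_ne u [] with rfl | hu₀
    · exact ihZ (by simpa using hv.isInfix)
    rcases eq_or_ne v [] with rfl | hv₀
    · exact ihY (by simpa using hu.isInfix)
    exact ⟨X, Y, Z, u, v, h, rfl, hu₀, hv₀, hu, hv⟩
  | vert X Y Z h ihY _ =>
    rw [expNT_vert h, Str2.toList_vcat (expNT_h_pos Y)] at hX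
    exact ihY hX

lemma Straddles.eq_of_isBlock {c d : A} {L : ℕ} (hcd : c ≠ d) {X : G.V} {w₁ w₂ : List A}
    (h₁ : G.Straddles X w₁) (h₂ : G.Straddles X w₂)
    (hb₁ : IsBlock c d L w₁) (hb₂ : IsBlock c d L w₂) : w₁ = w₂ := by
  obtain ⟨Y, Z, u₁, v₁, hX, rfl, hu₁, hv₁, hsu₁, hpv₁⟩ := h₁
  obtain ⟨Y', Z', u₂, v₂, hX', rfl, hu₂, hv₂, hsu₂, hpv₂⟩ := h₂
  obtain ⟨rfl, rfl⟩ : Y' = Y ∧ Z' = Z := by simpa [hX] using hX'.symm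
  have hlen := hb₁.length.trans hb₂.length.symm
  simp only [List.length_append] at hlen
  rcases le_total u₁.length u₂.length with hle | hle
  · exact hb₁.eq_of_straddle hcd hb₂ hu₁ hv₂ (List.suffix_of_suffix_length_le hsu₁ hsu₂ hle)
      (List.prefix_of_prefix_length_le hpv₂ hpv₁ (by omega))
  · exact (hb₂.eq_of_straddle hcd hb₁ hu₂ hv₁ (List.suffix_of_suffix_length_le hsu₂ hsu₁ hle)
      (List.prefix_of_prefix_length_le hpv₁ hpv₂ (by omega))).symm

theorem card_le_numNT_of_isBlock {c d : A} {L : ℕ} (hcd : c ≠ d) (hL : 2 ≤ L)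
    (W : Finset (List A)) (hW : ∀ w ∈ W, IsBlock c d L w ∧ w <:+: G.exp.toList) :
    W.card ≤ G.numNT := by
  have hstraddle (w : W) : ∃ X, G.Straddles X w :=
    G.exists_straddles ((hW w w.2).1.length ▸ hL) G.start (hW w w.2).2
  choose f hf using hstraddle
  let _ := G.fintypeV
  rw [← Fintype.card_coe W]
  refine Fintype.card_le_of_injective f fun w₁ w₂ h => Subtype.ext ?_
  exact (hf w₁).eq_of_isBlock hcd (h ▸ hf w₂) (hW w₁ w₁.2).1 (hW w₂ w₂.2).1

end SLP2

lemma List.filterMap_range_add_infix {α : Type} (f : ℕ → Option α) {a b n : ℕ}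
    (h : a + b ≤ n) :
    (List.range b).filterMap (fun t => f (a + t)) <:+: (List.range n).filterMap f := by
  obtain ⟨k, rfl⟩ := Nat.exists_eq_add_of_le h
  rw [List.range_add, List.range_add, List.filterMap_append, List.filterMap_append,
    List.filterMap_map]
  exact List.infix_append _ _ _

/-- The letter in column `t` of row `k` of `Bin_{2^n}`. -/
def binChar (n k t : ℕ) : Alpha3 :=
  if t = 0 ∨ t = n + 1 then .dollar else if k.testBit (n - t) then .one else .zero

def binWord (n k : ℕ) : List Alpha3 := (List.range (n + 2)).map (binChar n k)

lemma isBlock_binWord (n k : ℕ) : IsBlock .zero .dollar (n + 2) (binWord n k) := by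
  refine Or.inr ⟨by simp [binWord], fun t ht => ?_⟩
  simp only [binWord, List.getElem?_map, List.getElem?_range ht, Option.map_some,
    Option.some_inj, binChar]
  split_ifs <;> simp_all

lemma binWord_ne_replicate (n k : ℕ) : binWord n k ≠ List.replicate (n + 2) .zero := by
  intro h
  have := congrArg (·[0]?) h
  simp only [binWord, List.getElem?_map, List.getElem?_range (show 0 < n + 2 by omega),
    List.getElem?_replicate_of_lt (show 0 < n + 2 by omega), Option.map_some] at this
  simp [binChar] at this

lemma binWord_injOn (n : ℕ) : Set.InjOn (binWord n) {k | k < 2 ^ n} := by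
  intro k hk k' hk' h
  refine Nat.eq_of_testBit_eq fun b => ?_
  rcases lt_or_ge b n with hb | hb
  · have := congrArg (·[n - b]?) h
    simp only [binWord, binChar, List.getElem?_map,
      List.getElem?_range (show n - b < n + 2 by omega), Option.map_some, Option.some_inj,
      show ¬(n - b = 0 ∨ n - b = n + 1) by omega, if_false,
      show n - (n - b) = b by omega] at this
    revert this
    cases k.testBit b <;> cases k'.testBit b <;> simp
  · have hpow : 2 ^ n ≤ 2 ^ b := Nat.pow_le_pow_right two_pos hb
    rw [Nat.testBit_lt_two_pow (lt_of_lt_of_le hk hpow),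
      Nat.testBit_lt_two_pow (lt_of_lt_of_le hk' hpow)]

lemma shiftBinStr_f {n r j t : ℕ} (hr : r < 2 * 2 ^ n) (hj : j < 2 ^ n) (ht : t < n + 2) :
    (shiftBinStr n).f r (j * (n + 2) + t) =
      some (if j ≤ r ∧ r < j + 2 ^ n then binChar n (r - j) t else .zero) := by
  have hdiv : (j * (n + 2) + t) / (n + 2) = j := by
    rw [Nat.add_comm, Nat.add_mul_div_right _ _ (by omega), Nat.div_eq_of_lt ht, Nat.zero_add]
  have hmod : (j * (n + 2) + t) % (n + 2) = t := by
    rw [Nat.add_comm, Nat.add_mul_mod_self_right, Nat.mod_eq_of_lt ht]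
  have hcol : j * (n + 2) + t < 2 ^ n * (n + 2) := by nlinarith
  simp only [shiftBinStr, binStr, Str2.mk', hdiv, hmod, if_pos (And.intro hr hcol)]
  by_cases hjr : j ≤ r ∧ r < j + 2 ^ n
  · rw [if_pos hjr, if_pos hjr, if_pos ⟨by omega, ht⟩]
    rfl
  · rw [if_neg hjr, if_neg hjr]

/-- Block `j` of row `r` (both 0-indexed) occupies columns `j(n+2), …, j(n+2)+n+1`. -/
lemma shiftBin_block_infix_row {n r j : ℕ} (hr : r < 2 * 2 ^ n) (hj : j < 2 ^ n) :
    (List.range (n + 2)).map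
        (fun t => if j ≤ r ∧ r < j + 2 ^ n then binChar n (r - j) t else .zero) <:+:
      ((shiftBinStr n).rowStr r).toList := by
  rw [Str2.toList_rowStr]
  change _ <:+: (List.range (2 ^ n * (n + 2))).filterMap _
  convert List.filterMap_range_add_infix ((shiftBinStr n).f r) (a := j * (n + 2)) (b := n + 2)
    (by show _ ≤ 2 ^ n * (n + 2); nlinarith) using 1
  rw [← List.filterMap_eq_map]
  refine List.filterMap_congr fun t ht => ?_
  rw [shiftBinStr_f hr hj (List.mem_range.1 ht)]
  rfl

lemma binWord_infix_row {n r k : ℕ} (hkr : k ≤ r) (hk : k < 2 ^ n) (hrk : r - k < 2 ^ n) :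
    binWord n k <:+: ((shiftBinStr n).rowStr r).toList := by
  have hcond : r - k ≤ r ∧ r < r - k + 2 ^ n := by omega
  have := shiftBin_block_infix_row (n := n) (r := r) (j := r - k) (by omega) hrk
  simp only [hcond, and_self, if_true, Nat.sub_sub_self hkr] at this
  exact this

lemma replicate_zero_infix_row {n r j : ℕ} (hr : r < 2 * 2 ^ n) (hj : j < 2 ^ n)
    (hjr : ¬(j ≤ r ∧ r < j + 2 ^ n)) :
    List.replicate (n + 2) .zero <:+: ((shiftBinStr n).rowStr r).toList := by
  simpa only [if_neg hjr, List.map_const', List.length_range] using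
    shiftBin_block_infix_row hr hj

/-- For `i ≤ N` take the binary words of `0, …, i - 1`; for `i > N` those of `i - N, …, N - 1`
together with `0^{n+2}`, which is then block `0` of row `i - 1`. -/
lemma exists_blocks_infix_row (n i : ℕ) (hi : i ≤ 2 * 2 ^ n) :
    ∃ W : Finset (List Alpha3), min i (2 * 2 ^ n - i + 1) ≤ W.card ∧
      ∀ w ∈ W, IsBlock .zero .dollar (n + 2) w ∧
        w <:+: ((shiftBinStr n).rowStr (i - 1)).toList := by
  have hinj (s : Finset ℕ) (hs : ∀ k ∈ s, k < 2 ^ n) : (s.image (binWord n)).card = s.card :=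
    Finset.card_image_of_injOn fun k hk k' hk' => binWord_injOn n (hs k hk) (hs k' hk')
  rcases le_or_gt i (2 ^ n) with hiN | hiN
  · refine ⟨(Finset.range i).image (binWord n), ?_, ?_⟩
    · rw [hinj _ fun k hk => by simp at hk; omega, Finset.card_range]
      exact min_le_left _ _
    · simp only [Finset.mem_image, Finset.mem_range]
      rintro _ ⟨k, hk, rfl⟩
      exact ⟨isBlock_binWord n k, binWord_infix_row (by omega) (by omega) (by omega)⟩
  · refine ⟨insert (List.replicate (n + 2) .zero) ((Finset.Ico (i - 2 ^ n) (2 ^ n)).image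
      (binWord n)), ?_, ?_⟩
    · rw [Finset.card_insert_of_notMem (by simp [binWord_ne_replicate]),
        hinj _ fun k hk => by simp at hk; omega, Nat.card_Ico]
      omega
    · simp only [Finset.mem_insert, Finset.mem_image, Finset.mem_Ico]
      rintro _ (rfl | ⟨k, hk, rfl⟩)
      · exact ⟨Or.inl rfl, replicate_zero_infix_row (j := 0) (by omega) (by positivity) (by omega)⟩
      · exact ⟨isBlock_binWord n k, binWord_infix_row (by omega) (by omega) (by omega)⟩

theorem shiftbin_row_incompressible_general (n : ℕ) (i : ℕ)
    (hi2 : i ≤ 2 * 2 ^ n)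
    (G : SLP2 Alpha3)
    (hsup : ((shiftBinStr n).rowStr (i - 1)).toList <:+: (G.exp).toList) :
    min i (2 * 2 ^ n - i + 1) ≤ G.numNT := by
  obtain ⟨W, hcard, hW⟩ := exists_blocks_infix_row n i hi2
  exact hcard.trans <| G.card_le_numNT_of_isBlock (by decide : Alpha3.zero ≠ .dollar)
    (by omega : 2 ≤ n + 2) W fun w hw => ⟨(hW w hw).1, (hW w hw).2.trans hsup⟩

/-- For every `n ≥ 1`, `N = 2^n`, and `i ∈ [1..2N]`, with `R`
the `i`-th row of `ShiftBin_N` (a 1D string of length `N(n+2)`), every 1D SLP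
deriving a string containing `R` as a substring has at least
`min i (2N - i + 1)` nonterminals. -/
theorem shiftbin_row_incompressible (n : ℕ) (hn : 1 ≤ n) (i : ℕ)
    (hi1 : 1 ≤ i) (hi2 : i ≤ 2 * 2 ^ n)
    (G : SLP2 Alpha3) (hwf : G.WF) (h1d : G.OneDim)
    (hsup : ((shiftBinStr n).rowStr (i - 1)).toList <:+: (G.exp).toList) :
    min i (2 * 2 ^ n - i + 1) ≤ G.numNT :=
  shiftbin_row_incompressible_general n i hi2 G hsup
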